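/- If at iteration k the subproblem SP2 (44) is feasible and the integer combination y* returned already belongs to the cut set Z_k used by the master problem, then the master-problem solution (x_u*, x_l*, y_l*) satisfies f(x_u*, x_l*, y_l*) = θ(x_u*) := min{f(x_u*, x_c, y_c) : D x_c + E y_c ≤ b_l}, and hence (x_u*, x_l*, y_l*) is feasible—and therefore optimal—for the original bilevel problem. -/
import Mathlib


/-- Lemma 2 of the paper: if the subproblem SP2 is feasible and returns an
integer combination `y*` that already belongs to the cut set of the master
problem, then the master solution `(u*, x*, y*)` attains the true lower-level
optimal value `θ(u*) = min{f(u*, x, y) : (x, y) ∈ L}`, hence is feasible — and,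
the master being a relaxation, optimal — for the original bilevel problem. -/
theorem lemma2_termination_optimality {U X Y : Type*}
    (Ucon : U → X → Y → Prop) (L : Set (X × Y)) (f Fup : U → X → Y → ℝ)
    (M : Set (U × X × Y)) (ustar : U) (xstar : X) (ystar : Y)
    -- (u*, x*, y*) is an optimal solution of the master problem
    (hzM : (ustar, xstar, ystar) ∈ M)
    (hmasterOpt : ∀ z ∈ M, Fup ustar xstar ystar ≤ Fup z.1 z.2.1 z.2.2)
    -- the master problem is a relaxation of the bilevel problem
    (hrelax : {z : U × X × Y | Ucon z.1 z.2.1 z.2.2 ∧ (z.2.1, z.2.2) ∈ L ∧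
        ∀ q ∈ L, f z.1 z.2.1 z.2.2 ≤ f z.1 q.1 q.2} ⊆ M)
    -- (x*, y*) is lower-level feasible and the cut for y* ∈ Z_k is satisfied
    (hzL : (xstar, ystar) ∈ L) (hUc : Ucon ustar xstar ystar)
    (hcut : f ustar xstar ystar ≤ sInf ((fun x => f ustar x ystar) '' {x | (x, ystar) ∈ L}))
    -- SP2 is feasible: y* is part of an optimal lower-level solution at u*
    (hSP : ∀ q ∈ L, sInf ((fun x => f ustar x ystar) '' {x | (x, ystar) ∈ L}) ≤
        f ustar q.1 q.2) :
    f ustar xstar ystar = sInf ((fun p : X × Y => f ustar p.1 p.2) '' L) ∧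
    (∀ z : U × X × Y, (Ucon z.1 z.2.1 z.2.2 ∧ (z.2.1, z.2.2) ∈ L ∧
        ∀ q ∈ L, f z.1 z.2.1 z.2.2 ≤ f z.1 q.1 q.2) →
      Fup ustar xstar ystar ≤ Fup z.1 z.2.1 z.2.2) := by
  have hopt : ∀ q ∈ L, f ustar xstar ystar ≤ f ustar q.1 q.2 := fun q hq =>
    le_trans hcut (hSP q hq)
  constructor
  · apply le_antisymm
    · refine le_csInf ⟨f ustar xstar ystar, ⟨(xstar, ystar), hzL, rfl⟩⟩ ?_
      rintro b ⟨p, hp, rfl⟩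
      exact hopt p hp
    · exact csInf_le ⟨_, by rintro b ⟨p, hp, rfl⟩; exact hopt p hp⟩
        ⟨(xstar, ystar), hzL, rfl⟩
  · intro z hz
    exact hmasterOpt z (hrelax hz)
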